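/- Let π : Y → X be a continuous surjective map between topological spaces. Then the following are equivalent: (i) cl(⋃_α π⁻¹(F_α)) = π⁻¹(cl(⋃_α F_α)) for every nonempty family {F_α} of closed subsets of X that is directed upward by inclusion; (ii) (⋂_α π⁻¹(U_α))° = π⁻¹((⋂_α U_α)°) for every nonempty family {U_α} of open subsets of X that is directed downward by inclusion; (iii) every R_π-invariant open subset of Y is of the form π⁻¹(U) for some open U ⊆ X, and the map (y,z) ↦ y from R_π (with the subspace topology of Y×Y) onto Y is open; (iv) for every closed subset G ⊆ Y, the set F_G := {x ∈ X : π⁻¹(cl({x})) ⊆ G} is closed in X. -/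
import Mathlib


open TopologicalSpace

/-- The pseudo-graph of a continuous map `π : Y → X`. -/
def pseudoGraph {Y X : Type*} [TopologicalSpace X] (π : Y → X) : Set (Y × Y) :=
  {yz | π yz.2 ∈ closure {π yz.1}}

/-- A subset `Z ⊆ Y` is `R_π`-invariant if `z ∈ Z` and `(y, z) ∈ R_π` imply `y ∈ Z`. -/
def IsPseudoGraphInvariant {Y X : Type*} [TopologicalSpace X] (π : Y → X) (Z : Set Y) : Prop :=
  ∀ y z : Y, (y, z) ∈ pseudoGraph π → z ∈ Z → y ∈ Z

section Aux

variable {X : Type*} [TopologicalSpace X]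

/-- If `w ∈ closure {x}` and `U` is an open set containing `w`, then `x ∈ U`. -/
lemma aux_open_mem {x w : X} (h : w ∈ closure {x}) {U : Set X} (hU : IsOpen U)
    (hw : w ∈ U) : x ∈ U := by
  rcases mem_closure_iff.1 h U hU hw with ⟨t, htU, ht⟩
  rcases ht with rfl
  exact htU

/-- Transitivity of specialization via closures of singletons. -/
lemma aux_closure_trans {x w v : X} (h1 : w ∈ closure {x}) (h2 : v ∈ closure {w}) :
    v ∈ closure {x} :=
  closure_minimal (Set.singleton_subset_iff.2 h1) isClosed_closure h2

end Aux

/-- Characterizations of pseudo-openness for a continuous surjection `π : Y → X`. -/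
theorem stmt5 {Y X : Type*} [TopologicalSpace Y] [TopologicalSpace X]
    (π : Y → X) (hc : Continuous π) (hs : Function.Surjective π) :
    List.TFAE
      [∀ S : Set (Set X), S.Nonempty → (∀ F ∈ S, IsClosed F) → DirectedOn (· ⊆ ·) S →
          closure (⋃ F ∈ S, π ⁻¹' F) = π ⁻¹' closure (⋃₀ S),
        ∀ S : Set (Set X), S.Nonempty → (∀ U ∈ S, IsOpen U) →
            DirectedOn (fun U V => V ⊆ U) S →
          interior (⋂ U ∈ S, π ⁻¹' U) = π ⁻¹' interior (⋂₀ S),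
        (∀ V : Set Y, IsOpen V → IsPseudoGraphInvariant π V →
            ∃ U : Set X, IsOpen U ∧ V = π ⁻¹' U) ∧
          IsOpenMap (fun z : pseudoGraph π => z.1.1),
        ∀ G : Set Y, IsClosed G → IsClosed {x : X | π ⁻¹' closure {x} ⊆ G}] := by
  tfae_have 4 → 1 := by
    intro h4 S _ hcl _
    apply subset_antisymm
    · apply closure_minimal
      · refine Set.iUnion₂_subset fun F hF => Set.preimage_mono ?_
        exact subset_trans (Set.subset_sUnion_of_mem hF) subset_closure
      · exact (isClosed_closure).preimage hc
    · intro y hy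
      have hFG := h4 (closure (⋃ F ∈ S, π ⁻¹' F)) isClosed_closure
      have hsub : ⋃₀ S ⊆ {x : X | π ⁻¹' closure {x} ⊆ closure (⋃ F ∈ S, π ⁻¹' F)} := by
        rintro x ⟨F, hF, hxF⟩
        have h1 : closure {x} ⊆ F :=
          closure_minimal (Set.singleton_subset_iff.2 hxF) (hcl F hF)
        intro z hz
        exact subset_closure (Set.mem_biUnion hF (h1 hz))
      have h2 : closure (⋃₀ S) ⊆ {x : X | π ⁻¹' closure {x} ⊆ closure (⋃ F ∈ S, π ⁻¹' F)} :=
        closure_minimal hsub hFG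
      exact h2 hy (subset_closure rfl)
  tfae_have 1 → 4 := by
    intro h1 G hG
    set S : Set (Set X) := {F | IsClosed F ∧ π ⁻¹' F ⊆ G} with hS
    have hne : S.Nonempty := ⟨∅, isClosed_empty, by simp⟩
    have hcl : ∀ F ∈ S, IsClosed F := fun F hF => hF.1
    have hdir : DirectedOn (· ⊆ ·) S := by
      rintro F₁ ⟨h₁c, h₁s⟩ F₂ ⟨h₂c, h₂s⟩
      exact ⟨F₁ ∪ F₂, ⟨h₁c.union h₂c, by
        rw [Set.preimage_union]; exact Set.union_subset h₁s h₂s⟩,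
        Set.subset_union_left, Set.subset_union_right⟩
    have key := h1 S hne hcl hdir
    have heq : {x : X | π ⁻¹' closure {x} ⊆ G} = closure (⋃₀ S) := by
      ext x
      constructor
      · intro hx
        exact subset_closure ⟨closure {x}, ⟨isClosed_closure, hx⟩, subset_closure rfl⟩
      · intro hx
        have h1' : closure {x} ⊆ closure (⋃₀ S) :=
          closure_minimal (Set.singleton_subset_iff.2 hx) isClosed_closure
        have h2' : π ⁻¹' closure (⋃₀ S) ⊆ G := by
          rw [← key]
          apply closure_minimal _ hG
          exact Set.iUnion₂_subset fun F hF => hF.2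
        exact subset_trans (Set.preimage_mono h1') h2'
    rw [heq]
    exact isClosed_closure
  tfae_have 4 → 2 := by
    intro h4 S _ hop _
    apply subset_antisymm
    · intro y hy
      have hVW := h4 (interior (⋂ U ∈ S, π ⁻¹' U))ᶜ (isClosed_compl_iff.2 isOpen_interior)
      -- W = complement of the closed set, open, contained in ⋂₀ S
      set W := {x : X | π ⁻¹' closure {x} ⊆ (interior (⋂ U ∈ S, π ⁻¹' U))ᶜ}ᶜ with hW
      have hWopen : IsOpen W := hVW.isOpen_compl
      have hWsub : W ⊆ ⋂₀ S := by
        intro x hx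
        simp only [hW, Set.mem_compl_iff, Set.mem_setOf_eq, Set.not_subset,
          Set.mem_preimage, Set.not_notMem] at hx
        obtain ⟨z, hz1, hz2⟩ := hx
        intro U hU
        have hzU : π z ∈ U := by
          have := interior_subset hz2
          exact Set.mem_iInter₂.1 this U hU
        exact aux_open_mem hz1 (hop U hU) hzU
      have hWint : W ⊆ interior (⋂₀ S) := interior_maximal hWsub hWopen
      apply hWint
      simp only [hW, Set.mem_compl_iff, Set.mem_setOf_eq, Set.not_subset,
        Set.mem_preimage, Set.not_notMem]
      exact ⟨y, subset_closure rfl, by simpa using hy⟩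
    · apply interior_maximal
      · refine Set.subset_iInter₂ fun U hU => Set.preimage_mono ?_
        exact subset_trans interior_subset (Set.sInter_subset_of_mem hU)
      · exact isOpen_interior.preimage hc
  tfae_have 2 → 4 := by
    intro h2 G hG
    set S : Set (Set X) := {U | IsOpen U ∧ Gᶜ ⊆ π ⁻¹' U} with hS
    have hne : S.Nonempty := ⟨Set.univ, isOpen_univ, by simp⟩
    have hop : ∀ U ∈ S, IsOpen U := fun U hU => hU.1
    have hdir : DirectedOn (fun U V => V ⊆ U) S := by
      rintro U₁ ⟨h₁o, h₁s⟩ U₂ ⟨h₂o, h₂s⟩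
      exact ⟨U₁ ∩ U₂, ⟨h₁o.inter h₂o, by
        rw [Set.preimage_inter]; exact Set.subset_inter h₁s h₂s⟩,
        Set.inter_subset_left, Set.inter_subset_right⟩
    have key := h2 S hne hop hdir
    have heq : {x : X | π ⁻¹' closure {x} ⊆ G} = (⋂₀ S)ᶜ := by
      ext x
      constructor
      · intro hx
        rw [Set.mem_compl_iff]
        intro hmem
        have hU : (closure {x})ᶜ ∈ S := by
          refine ⟨isClosed_closure.isOpen_compl, ?_⟩
          intro z hz
          simp only [Set.mem_preimage, Set.mem_compl_iff]
          intro hzc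
          exact hz (hx hzc)
        exact (hmem _ hU) (subset_closure rfl)
      · intro hx
        rw [Set.mem_compl_iff, Set.mem_sInter] at hx
        push_neg at hx
        obtain ⟨U, hUS, hxU⟩ := hx
        intro z hz
        by_contra hzG
        exact hxU (aux_open_mem hz hUS.1 (hUS.2 hzG))
    rw [heq]
    rw [isClosed_compl_iff]
    -- show ⋂₀ S is open
    have hGc : Gᶜ ⊆ π ⁻¹' interior (⋂₀ S) := by
      rw [← key]
      apply interior_maximal _ hG.isOpen_compl
      exact Set.subset_iInter₂ fun U hU => hU.2
    have : ⋂₀ S ⊆ interior (⋂₀ S) := by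
      intro x hx
      -- x ∈ ⋂₀S means x ∉ {x | π⁻¹cl{x} ⊆ G}; i.e. ∃ z ∉ G with π z ∈ cl{x}
      have hx' : ¬ (π ⁻¹' closure {x} ⊆ G) := by
        intro hcon
        have hm : x ∈ {x : X | π ⁻¹' closure {x} ⊆ G} := hcon
        rw [heq] at hm
        exact hm hx
      rw [Set.not_subset] at hx'
      obtain ⟨z, hz1, hz2⟩ := hx'
      have hzint : π z ∈ interior (⋂₀ S) := hGc hz2
      exact aux_open_mem hz1 isOpen_interior hzint
    exact (Set.Subset.antisymm interior_subset this) ▸ isOpen_interior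
  tfae_have 4 → 3 := by
    intro h4
    constructor
    · intro V hV hinv
      refine ⟨{x : X | π ⁻¹' closure {x} ⊆ Vᶜ}ᶜ, (h4 Vᶜ hV.isClosed_compl).isOpen_compl, ?_⟩
      ext y
      simp only [Set.mem_preimage, Set.mem_compl_iff, Set.mem_setOf_eq, Set.not_subset]
      constructor
      · intro hy
        exact ⟨y, subset_closure rfl, fun h => h hy⟩
      · rintro ⟨z, hz1, hz2⟩
        rw [not_not] at hz2
        exact hinv y z hz1 hz2
    · intro O hO
      rw [isOpen_induced_iff] at hO
      obtain ⟨T, hT, rfl⟩ := hO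
      rw [isOpen_iff_forall_mem_open]
      rintro y ⟨⟨⟨y', z⟩, hR⟩, hpT, rfl⟩
      obtain ⟨V, W, hVo, hWo, hyV, hzW, hVW⟩ := isOpen_prod_iff.1 hT y' z hpT
      refine ⟨V ∩ π ⁻¹' {x : X | π ⁻¹' closure {x} ⊆ Wᶜ}ᶜ, ?_, ?_, ?_⟩
      · rintro u ⟨huV, huc⟩
        simp only [Set.mem_preimage, Set.mem_compl_iff, Set.mem_setOf_eq, Set.not_subset] at huc
        obtain ⟨w, hw1, hw2⟩ := huc
        rw [not_not] at hw2
        exact ⟨⟨(u, w), hw1⟩, hVW ⟨huV, hw2⟩, rfl⟩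
      · exact hVo.inter ((h4 Wᶜ hWo.isClosed_compl).isOpen_compl.preimage hc)
      · refine ⟨hyV, ?_⟩
        simp only [Set.mem_preimage, Set.mem_compl_iff, Set.mem_setOf_eq, Set.not_subset]
        exact ⟨z, hR, fun h => h hzW⟩
  tfae_have 3 → 4 := by
    rintro ⟨ha, hb⟩ G hG
    set V : Set Y := (fun z : pseudoGraph π => z.1.1) ''
      ((fun z : pseudoGraph π => z.1.2) ⁻¹' Gᶜ) with hVdef
    have hVopen : IsOpen V :=
      hb _ (hG.isOpen_compl.preimage (continuous_snd.comp continuous_subtype_val))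
    have hVmem : ∀ y : Y, y ∈ V ↔ ∃ z, π z ∈ closure {π y} ∧ z ∉ G := by
      intro y
      constructor
      · rintro ⟨⟨⟨y', z⟩, hR⟩, hz, rfl⟩
        exact ⟨z, hR, hz⟩
      · rintro ⟨z, hz1, hz2⟩
        exact ⟨⟨(y, z), hz1⟩, hz2, rfl⟩
    have hinv : IsPseudoGraphInvariant π V := by
      intro y z hyz hz
      rw [hVmem] at hz ⊢
      obtain ⟨w, hw1, hw2⟩ := hz
      exact ⟨w, aux_closure_trans hyz hw1, hw2⟩
    obtain ⟨U, hUo, hVU⟩ := ha V hVopen hinv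
    have heq : {x : X | π ⁻¹' closure {x} ⊆ G} = Uᶜ := by
      ext x
      obtain ⟨y, rfl⟩ := hs x
      have : y ∈ π ⁻¹' U ↔ y ∈ V := by rw [hVU]
      constructor
      · intro hx
        rw [Set.mem_compl_iff]
        intro hU'
        rw [Set.mem_preimage] at this
        have hyV := this.1 hU'
        rw [hVmem] at hyV
        obtain ⟨z, hz1, hz2⟩ := hyV
        exact hz2 (hx hz1)
      · intro hx z hz
        by_contra hzG
        have : y ∈ V := (hVmem y).2 ⟨z, hz, hzG⟩
        rw [hVU] at this
        exact hx this
    rw [heq]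
    exact hUo.isClosed_compl
  tfae_finish
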